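/- For the 2-leg spider with span bounded by s over the simple random walk on the homogeneous tree T_3, encode a configuration by (l,k), where l=d(x_1,x_2) is the distance between the two legs and k=|h(x_1)−h(x_2)| is their height difference with respect to the root. This factor process is a continuous-time Markov chain with rates: from (1,1), rate 3 to (2,2) and rate 1 to (2,0); from (l,l) with 1<l<s, rate 3 to (l+1,l+1), rate 1 to (l+1,l−1) and rate 2 to (l−1,l−1); from (s,s), rate 2 to (s−1,s−1); from (l,0) with 0<l<s, rate 2 to (l−1,1) and rate 4 to (l+1,1); from (s,0), rate 2 to (s−1,1); from (l,k) with 0<l<s, 0<k<l, rate 1 to each of (l+1,k+1) and (l+1,k−1) and rate 2 to each of (l−1,k+1) and (l−1,k−1); from (s,k) with 0<k<s, rate 1 to each of (s−1,k−1) and (s−1,k+1). Let Π_s be its stationary distribution and B_s={(l,0): 1≤l≤s}. Then Π_s(B_s)→0 as s→∞. -/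

import Mathlib

/-!
Test the stationarity equation `Π Q = 0` against the height difference `k` and its square: for
every test function `f`, the generator `Lf v = ∑ w, q v w (f w - f v)` has mean zero under `Π`.
The drift of `k` is `+6` on `B_s` away from `l = s`, `+2` at `(s,0)` and `(1,1)`, `-2` at `(s,s)`
and `0` elsewhere, so `L k ≥ 2·1_{B_s} - 2·1_{(s,s)}` and `Π(B_s) ≤ Π(s,s)`. The drift of `k²` is
at most `8` everywhere and equals `2 - 4s` at `(s,s)`, so `(4s + 4) Π(s,s) ≤ 8`. Together,
`Π_s(B_s) ≤ 2 / (s + 1)`.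
-/

open Classical in
/-- The rates of the factor chain on pairs (l,k) for span bound `s`. -/
noncomputable def factorRate (s : ℕ) (v w : ℕ × ℕ) : ℝ :=
  let l := v.1; let k := v.2
  if l = 1 ∧ k = 1 then
    (if w = (2, 2) then 3 else if w = (2, 0) then 1 else 0)
  else if k = l ∧ 1 < l ∧ l < s then
    (if w = (l + 1, l + 1) then 3 else if w = (l + 1, l - 1) then 1
     else if w = (l - 1, l - 1) then 2 else 0)
  else if l = s ∧ k = s then
    (if w = (s - 1, s - 1) then 2 else 0)
  else if k = 0 ∧ 0 < l ∧ l < s then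
    (if w = (l - 1, 1) then 2 else if w = (l + 1, 1) then 4 else 0)
  else if l = s ∧ k = 0 then
    (if w = (s - 1, 1) then 2 else 0)
  else if 0 < l ∧ l < s ∧ 0 < k ∧ k < l then
    (if w = (l + 1, k + 1) ∨ w = (l + 1, k - 1) then 1
     else if w = (l - 1, k + 1) ∨ w = (l - 1, k - 1) then 2 else 0)
  else if l = s ∧ 0 < k ∧ k < s then
    (if w = (s - 1, k - 1) ∨ w = (s - 1, k + 1) then 1 else 0)
  else 0

/-- The states of the factor chain: 1 ≤ l ≤ s, k ≤ l, and k ≡ l (mod 2). -/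
def ValidState (s : ℕ) (v : ℕ × ℕ) : Prop :=
  1 ≤ v.1 ∧ v.1 ≤ s ∧ v.2 ≤ v.1 ∧ v.1 % 2 = v.2 % 2

open Finset

section Generator

variable {α : Type*} (S : Finset α) (q : α → α → ℝ)

noncomputable def markovGenerator (f : α → ℝ) (v : α) : ℝ :=
  ∑ w ∈ S, q v w * (f w - f v)

theorem sum_mul_markovGenerator_eq_zero {π : α → ℝ}
    (hstat : ∀ w ∈ S, ∑ v ∈ S, π v * q v w = π w * ∑ v ∈ S, q w v) (f : α → ℝ) :
    ∑ v ∈ S, π v * markovGenerator S q f v = 0 := by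
  have hflow : ∑ v ∈ S, ∑ w ∈ S, π v * q v w * f w = ∑ v ∈ S, ∑ w ∈ S, π v * q v w * f v := by
    rw [sum_comm]
    refine sum_congr rfl fun w hw => ?_
    rw [← sum_mul, hstat w hw, mul_sum, sum_mul]
  simp only [markovGenerator, mul_sum, mul_sub, sum_sub_distrib, ← mul_assoc]
  rw [hflow, sub_self]

theorem sum_mul_le_sum_mul_of_le_on_support {P : α → Prop} {π g h : α → ℝ}
    (hπ : ∀ v, 0 ≤ π v) (hsupp : ∀ v, ¬P v → π v = 0) (hle : ∀ v, P v → g v ≤ h v) :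
    ∑ v ∈ S, π v * g v ≤ ∑ v ∈ S, π v * h v :=
  sum_le_sum fun v _ => by
    by_cases hv : P v
    · exact mul_le_mul_of_nonneg_left (hle v hv) (hπ v)
    · simp [hsupp v hv]

end Generator

abbrev factorBox (s : ℕ) : Finset (ℕ × ℕ) := range (s + 2) ×ˢ range (s + 2)

noncomputable abbrev factorGenerator (s : ℕ) : (ℕ × ℕ → ℝ) → ℕ × ℕ → ℝ :=
  markovGenerator (factorBox s) (factorRate s)

section Rows

variable {s l k : ℕ} (f : ℕ × ℕ → ℝ)

theorem factorGenerator_one_one (hs : 1 ≤ s) :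
    factorGenerator s f (1, 1) = 3 * (f (2, 2) - f (1, 1)) + (f (2, 0) - f (1, 1)) := by
  have row : factorRate s (1, 1) = fun w =>
      (if w = (2, 2) then 3 else 0) + (if w = (2, 0) then 1 else 0) := by
    funext w; simp (disch := omega) only [factorRate, true_and, and_true, if_pos, if_neg]
    split_ifs <;> simp_all [Prod.ext_iff]
  simp (disch := omega) only [markovGenerator, row, add_mul, ite_mul, zero_mul, one_mul,
    sum_add_distrib, sum_ite_eq', mem_product, mem_range, if_pos]

theorem factorGenerator_diag (h1 : 1 < l) (h2 : l < s) :
    factorGenerator s f (l, l) = 3 * (f (l + 1, l + 1) - f (l, l))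
      + (f (l + 1, l - 1) - f (l, l)) + 2 * (f (l - 1, l - 1) - f (l, l)) := by
  have row : factorRate s (l, l) = fun w => (if w = (l + 1, l + 1) then 3 else 0)
      + (if w = (l + 1, l - 1) then 1 else 0) + (if w = (l - 1, l - 1) then 2 else 0) := by
    funext w; simp (disch := omega) only [factorRate, true_and, if_pos, if_neg]
    split_ifs <;> simp_all [Prod.ext_iff]
  simp (disch := omega) only [markovGenerator, row, add_mul, ite_mul, zero_mul, one_mul,
    sum_add_distrib, sum_ite_eq', mem_product, mem_range, if_pos]

theorem factorGenerator_top_diag (hs : 2 ≤ s) :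
    factorGenerator s f (s, s) = 2 * (f (s - 1, s - 1) - f (s, s)) := by
  have row : factorRate s (s, s) = fun w => if w = (s - 1, s - 1) then 2 else 0 := by
    funext w; simp (disch := omega) only [factorRate, true_and, and_true, if_pos, if_neg]
    split_ifs <;> simp_all [Prod.ext_iff]
  simp (disch := omega) only [markovGenerator, row, ite_mul, zero_mul, sum_ite_eq', mem_product,
    mem_range, if_pos]

theorem factorGenerator_axis (h1 : 0 < l) (h2 : l < s) :
    factorGenerator s f (l, 0) = 2 * (f (l - 1, 1) - f (l, 0)) + 4 * (f (l + 1, 1) - f (l, 0)) := by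
  have row : factorRate s (l, 0) = fun w =>
      (if w = (l - 1, 1) then 2 else 0) + (if w = (l + 1, 1) then 4 else 0) := by
    funext w; simp (disch := omega) only [factorRate, true_and, and_true, if_pos, if_neg]
    split_ifs <;> simp_all [Prod.ext_iff]
    omega
  simp (disch := omega) only [markovGenerator, row, add_mul, ite_mul, zero_mul,
    sum_add_distrib, sum_ite_eq', mem_product, mem_range, if_pos]

theorem factorGenerator_top_axis (hs : 0 < s) :
    factorGenerator s f (s, 0) = 2 * (f (s - 1, 1) - f (s, 0)) := by
  have row : factorRate s (s, 0) = fun w => if w = (s - 1, 1) then 2 else 0 := by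
    funext w; simp (disch := omega) only [factorRate, true_and, and_true, if_pos, if_neg]
    split_ifs <;> simp_all [Prod.ext_iff]
  simp (disch := omega) only [markovGenerator, row, ite_mul, zero_mul, sum_ite_eq', mem_product,
    mem_range, if_pos]

theorem factorGenerator_interior (h1 : 0 < k) (h2 : k < l) (h3 : l < s) :
    factorGenerator s f (l, k) = (f (l + 1, k + 1) - f (l, k)) + (f (l + 1, k - 1) - f (l, k))
      + 2 * (f (l - 1, k + 1) - f (l, k)) + 2 * (f (l - 1, k - 1) - f (l, k)) := by
  have row : factorRate s (l, k) = fun w => (if w = (l + 1, k + 1) then 1 else 0)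
      + (if w = (l + 1, k - 1) then 1 else 0) + (if w = (l - 1, k + 1) then 2 else 0)
      + (if w = (l - 1, k - 1) then 2 else 0) := by
    funext w; simp (disch := omega) only [factorRate, if_pos, if_neg]
    split_ifs <;> simp_all [Prod.ext_iff]
  simp (disch := omega) only [markovGenerator, row, add_mul, ite_mul, zero_mul, one_mul,
    sum_add_distrib, sum_ite_eq', mem_product, mem_range, if_pos]

theorem factorGenerator_top (h1 : 0 < k) (h2 : k < s) :
    factorGenerator s f (s, k) = (f (s - 1, k - 1) - f (s, k)) + (f (s - 1, k + 1) - f (s, k)) := by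
  have row : factorRate s (s, k) = fun w =>
      (if w = (s - 1, k - 1) then 1 else 0) + (if w = (s - 1, k + 1) then 1 else 0) := by
    funext w; simp (disch := omega) only [factorRate, true_and, if_pos, if_neg]
    split_ifs <;> simp_all [Prod.ext_iff]
    omega
  simp (disch := omega) only [markovGenerator, row, add_mul, ite_mul, zero_mul, one_mul,
    sum_add_distrib, sum_ite_eq', mem_product, mem_range, if_pos]

end Rows

@[elab_as_elim]
theorem ValidState.shape_cases {s : ℕ} {P : ℕ × ℕ → Prop} {v : ℕ × ℕ} (hv : ValidState s v)
    (one_one : P (1, 1)) (diag : ∀ l, 1 < l → l < s → P (l, l)) (top_diag : P (s, s))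
    (axis : ∀ l, 0 < l → l < s → P (l, 0)) (top_axis : P (s, 0))
    (interior : ∀ l k, 0 < k → k < l → l < s → P (l, k))
    (top : ∀ k, 0 < k → k < s → P (s, k)) : P v := by
  obtain ⟨l, k⟩ := v
  obtain ⟨hl, hls, hkl, -⟩ := hv
  dsimp only at hl hls hkl
  rcases hkl.lt_or_eq with hkl | rfl
  · rcases Nat.eq_zero_or_pos k with rfl | hk
    · rcases hls.lt_or_eq with hls | rfl
      exacts [axis l hl hls, top_axis]
    · rcases hls.lt_or_eq with hls | rfl
      exacts [interior l k hk hkl hls, top k hk hkl]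
  · rcases hl.lt_or_eq with hl | rfl
    · rcases hls.lt_or_eq with hls | rfl
      exacts [diag k hl hls, top_diag]
    · exact one_one

theorem factorGenerator_height_ge {s : ℕ} (hs : 2 ≤ s) {v : ℕ × ℕ} (hv : ValidState s v) :
    2 * (if v ∈ Icc 1 s ×ˢ {0} then 1 else 0) - 2 * (if v = (s, s) then 1 else 0)
      ≤ factorGenerator s (fun w => (w.2 : ℝ)) v := by
  refine hv.shape_cases ?_ (fun l h1 h2 => ?_) ?_ (fun l h1 h2 => ?_) ?_ (fun l k h1 h2 h3 => ?_)
    (fun k h1 h2 => ?_)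
  · rw [factorGenerator_one_one _ (by omega)]
    simp [Prod.ext_iff]
    split_ifs <;> first | omega | linarith
  · rw [factorGenerator_diag _ h1 h2]
    simp [Prod.ext_iff, Nat.cast_pred (by omega : 0 < l)]
    split_ifs <;> first | omega | linarith
  · rw [factorGenerator_top_diag _ hs]
    simp [Prod.ext_iff, Nat.cast_pred (by omega : 0 < s)]
    split_ifs <;> first | omega | linarith
  · rw [factorGenerator_axis _ h1 h2]
    simp [Prod.ext_iff]
    split_ifs <;> first | omega | linarith
  · rw [factorGenerator_top_axis _ (by omega)]
    simp [Prod.ext_iff]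
    split_ifs <;> first | omega | linarith
  · rw [factorGenerator_interior _ h1 h2 h3]
    simp [Prod.ext_iff, Nat.cast_pred h1]
    split_ifs <;> first | omega | linarith
  · rw [factorGenerator_top _ h1 h2]
    simp [Prod.ext_iff, Nat.cast_pred h1]
    split_ifs <;> first | omega | linarith

theorem factorGenerator_height_sq_le {s : ℕ} (hs : 2 ≤ s) {v : ℕ × ℕ} (hv : ValidState s v) :
    factorGenerator s (fun w => (w.2 : ℝ) ^ 2) v
      ≤ 8 - (4 + 4 * s) * (if v = (s, s) then 1 else 0) := by
  refine hv.shape_cases ?_ (fun l h1 h2 => ?_) ?_ (fun l h1 h2 => ?_) ?_ (fun l k h1 h2 h3 => ?_)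
    (fun k h1 h2 => ?_)
  · rw [factorGenerator_one_one _ (by omega)]
    simp [Prod.ext_iff]
    split_ifs <;> first | omega | nlinarith
  · rw [factorGenerator_diag _ h1 h2]
    simp [Prod.ext_iff, Nat.cast_pred (by omega : 0 < l)]
    split_ifs <;> first | omega | nlinarith
  · rw [factorGenerator_top_diag _ hs]
    simp [Nat.cast_pred (by omega : 0 < s)]
    nlinarith
  · rw [factorGenerator_axis _ h1 h2]
    simp [Prod.ext_iff]
    split_ifs <;> first | omega | nlinarith
  · rw [factorGenerator_top_axis _ (by omega)]
    simp [Prod.ext_iff]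
    split_ifs <;> first | omega | nlinarith
  · rw [factorGenerator_interior _ h1 h2 h3]
    simp [Prod.ext_iff, Nat.cast_pred h1]
    split_ifs <;> first | omega | nlinarith
  · rw [factorGenerator_top _ h1 h2]
    simp [Prod.ext_iff, Nat.cast_pred h1]
    split_ifs <;> first | omega | nlinarith

theorem sum_axis_le_two_div {s : ℕ} (hs : 2 ≤ s) {π : ℕ × ℕ → ℝ} (hπ : ∀ v, 0 ≤ π v)
    (hsupp : ∀ v, ¬ValidState s v → π v = 0) (hprob : ∑ v ∈ factorBox s, π v = 1)
    (hstat : ∀ w, ∑ v ∈ factorBox s, π v * factorRate s v w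
      = π w * ∑ v ∈ factorBox s, factorRate s w v) :
    ∑ l ∈ Icc 1 s, π (l, 0) ≤ 2 / (s + 1) := by
  have hss : (s, s) ∈ factorBox s := by simp
  have hB : Icc 1 s ×ˢ {0} ⊆ factorBox s := fun ⟨_, _⟩ hv => by simp at hv ⊢; omega
  have hmean (f : ℕ × ℕ → ℝ) : ∑ v ∈ factorBox s, π v * factorGenerator s f v = 0 :=
    sum_mul_markovGenerator_eq_zero _ _ (fun w _ => hstat w) f
  have hB_le : ∑ l ∈ Icc 1 s, π (l, 0) ≤ π (s, s) := by
    have h := (sum_mul_le_sum_mul_of_le_on_support _ hπ hsupp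
      (fun v => factorGenerator_height_ge hs)).trans_eq (hmean _)
    simp only [mul_sub, mul_ite, mul_one, mul_zero, ← sum_mul, sum_sub_distrib, sum_ite_mem,
      inter_eq_right.2 hB, sum_product, sum_singleton, sum_ite_eq', if_pos hss] at h
    linarith
  have hss_le : (4 + 4 * s) * π (s, s) ≤ 8 := by
    have h := (hmean _).symm.trans_le (sum_mul_le_sum_mul_of_le_on_support _ hπ hsupp
      (fun v => factorGenerator_height_sq_le hs))
    simp only [mul_sub, mul_ite, mul_one, mul_zero, ← sum_mul, sum_sub_distrib, sum_ite_eq',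
      if_pos hss, hprob] at h
    linarith
  rw [le_div_iff₀ (by positivity)]
  nlinarith [hπ (s, s)]

theorem factor_chain_stationary_mass_of_B_tendsto_zero
    -- Pis s is, for every s, a stationary distribution of the factor chain:
    (Pis : ℕ → ℕ × ℕ → ℝ)
    (hnonneg : ∀ s v, 0 ≤ Pis s v)
    (hsupp : ∀ s v, ¬ ValidState s v → Pis s v = 0)
    (hprob : ∀ s : ℕ, 2 ≤ s →
      ∑ v ∈ Finset.range (s + 2) ×ˢ Finset.range (s + 2), Pis s v = 1)
    -- stationarity: Π Q = 0, i.e. inflow = outflow at every state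
    (hstat : ∀ s : ℕ, 2 ≤ s → ∀ w : ℕ × ℕ,
      ∑ v ∈ Finset.range (s + 2) ×ˢ Finset.range (s + 2), Pis s v * factorRate s v w
        = Pis s w * ∑ v ∈ Finset.range (s + 2) ×ˢ Finset.range (s + 2), factorRate s w v) :
    -- then Π_s(B_s) → 0 as s → ∞, where B_s = {(l,0) : 1 ≤ l ≤ s}
    Filter.Tendsto (fun s : ℕ => ∑ l ∈ Finset.Icc 1 s, Pis s (l, 0))
      Filter.atTop (nhds 0) := by
  have hlim : Filter.Tendsto (fun s : ℕ => 2 * (1 / ((s : ℝ) + 1))) Filter.atTop (nhds 0) := by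
    simpa using tendsto_one_div_add_atTop_nhds_zero_nat.const_mul (2 : ℝ)
  refine tendsto_of_tendsto_of_tendsto_of_le_of_le' tendsto_const_nhds hlim
    (Filter.Eventually.of_forall fun s => sum_nonneg fun l _ => hnonneg s _) ?_
  filter_upwards [Filter.eventually_ge_atTop 2] with s hs
  rw [mul_one_div]
  exact sum_axis_le_two_div hs (hnonneg s) (hsupp s) (hprob s hs) (hstat s hs)
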